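/- Let M ≥ 1, let H_0 and square matrices H_{j,0}, H_{j,1} (1 ≤ j ≤ M), and R be given, and define K_M = (-(H_{M,1} + R H_{M,0}))⁻¹ and K_j = (-(H_{j,1} + H_0 K_{j+1} H_{j+1,0}))⁻¹ for 1 ≤ j ≤ M-1, assuming all these inverses exist. Suppose row vectors Φ^{(0)}, …, Φ^{(M)} satisfy Φ^{(i-1)} H_0 + Φ^{(i)} H_{i,1} + Φ^{(i+1)} H_{i+1,0} = 0 for 1 ≤ i ≤ M-1 and Φ^{(M-1)} H_0 + Φ^{(M)}(H_{M,1} + R H_{M,0}) = 0. Then Φ^{(i)} = Φ^{(i-1)} H_0 K_i for all 1 ≤ i ≤ M, and hence Φ^{(i)} = Φ^{(0)} ∏_{j=1}^{i} (H_0 K_j). -/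
import Mathlib

open Matrix

private lemma solve_step {d : ℕ} (v w : Fin d → ℝ) (S : Matrix (Fin d) (Fin d) ℝ)
    (hu : IsUnit (-S)) (h : v + w ᵥ* S = 0) : w = v ᵥ* (-S)⁻¹ := by
  have h1 : w ᵥ* (-S) = v := by
    rw [Matrix.vecMul_neg]
    linear_combination -h
  have h2 : w ᵥ* ((-S) * (-S)⁻¹) = v ᵥ* (-S)⁻¹ := by
    rw [← Matrix.vecMul_vecMul, h1]
  rwa [Matrix.mul_nonsing_inv _ ((Matrix.isUnit_iff_isUnit_det _).mp hu),
    Matrix.vecMul_one] at h2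

/-- Backward-substitution recursion expressing the boundary-level stationary
vectors of the truncated level-dependent QBD process in terms of `Φ^{(0)}`:
`Φ^{(i)} = Φ^{(i-1)} H_0 K_i` and hence `Φ^{(i)} = Φ^{(0)} ∏_{j=1}^{i} (H_0 K_j)`. -/
theorem backward_substitution_recursion {d : ℕ} (M : ℕ) (hM : 1 ≤ M)
    (H0 R : Matrix (Fin d) (Fin d) ℝ)
    (Hd H1 K : ℕ → Matrix (Fin d) (Fin d) ℝ)
    (hKMunit : IsUnit (-(H1 M + R * Hd M)))
    (hKM : K M = (-(H1 M + R * Hd M))⁻¹)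
    (hKjunit : ∀ j, 1 ≤ j → j ≤ M - 1 → IsUnit (-(H1 j + H0 * K (j + 1) * Hd (j + 1))))
    (hKj : ∀ j, 1 ≤ j → j ≤ M - 1 → K j = (-(H1 j + H0 * K (j + 1) * Hd (j + 1)))⁻¹)
    (Φ : ℕ → (Fin d → ℝ))
    (hbal : ∀ i, 1 ≤ i → i ≤ M - 1 →
      Φ (i - 1) ᵥ* H0 + Φ i ᵥ* H1 i + Φ (i + 1) ᵥ* Hd (i + 1) = 0)
    (hbalM : Φ (M - 1) ᵥ* H0 + Φ M ᵥ* (H1 M + R * Hd M) = 0) :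
    ∀ i, 1 ≤ i → i ≤ M →
      Φ i = Φ (i - 1) ᵥ* (H0 * K i) ∧
      Φ i = Φ 0 ᵥ* (((List.range i).map (fun j => H0 * K (j + 1))).prod) := by
  -- downward recursion
  have step : ∀ k i, i + k = M → 1 ≤ i → Φ i = Φ (i - 1) ᵥ* (H0 * K i) := by
    intro k
    induction k with
    | zero =>
      intro i hik hi
      simp at hik
      subst hik
      rw [hKM, ← Matrix.vecMul_vecMul]
      exact solve_step _ _ _ hKMunit hbalM
    | succ k ih =>
      intro i hik hi
      have hle : i ≤ M - 1 := by omega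
      have hb := hbal i hi hle
      have hnext : Φ (i + 1) = Φ i ᵥ* (H0 * K (i + 1)) := by
        have := ih (i + 1) (by omega) (by omega)
        simpa using this
      rw [hnext, Matrix.vecMul_vecMul] at hb
      have hb' : Φ (i - 1) ᵥ* H0 + Φ i ᵥ* (H1 i + H0 * K (i + 1) * Hd (i + 1)) = 0 := by
        rw [Matrix.vecMul_add]
        linear_combination (norm := module) hb
      rw [hKj i hi hle, ← Matrix.vecMul_vecMul]
      exact solve_step _ _ _ (hKjunit i hi hle) hb'
  intro i hi hiM
  refine ⟨step (M - i) i (by omega) hi, ?_⟩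
  clear hbal hbalM hKj hKjunit hKM hKMunit
  induction i with
  | zero => omega
  | succ n ih =>
    rcases Nat.eq_zero_or_pos n with hn | hn
    · subst hn
      have hp : ((List.range 1).map (fun j => H0 * K (j + 1))).prod = H0 * K 1 := by
        rw [List.range_succ]; simp
      rw [hp]
      simpa using step (M - 1) 1 (by omega) le_rfl
    · have h1 := step (M - (n + 1)) (n + 1) (by omega) (by omega)
      simp only [Nat.add_sub_cancel] at h1
      rw [h1, ih hn (by omega), List.range_succ, List.map_append, List.prod_append,
        Matrix.vecMul_vecMul]
      simp
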